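/- Let n ≥ 1 and assume D((uC_φ)ⁿ) is dense in L²(μ) and all J_i (0 ≤ i ≤ n) are finite a.e. Then uC_φ is n-expansive, i.e. Σ_{i=0}^{n} (-1)^i C(n,i) ‖(uC_φ)^i f‖² ≤ 0 for all f ∈ D((uC_φ)ⁿ), if and only if Δ_{J,n}(x) := Σ_{i=0}^{n} (-1)^i C(n,i) J_i(x) ≤ 0 for μ-almost every x. -/

import Mathlib

/-!
The change of variables `∫ w · (g ∘ φ) dμ = ∫ g d((w μ) ∘ φ⁻¹)` together with the Radon–Nikodym
theorem gives, by induction on `i`, `‖(uC_φ)ⁱ f‖² = ∫ Jᵢ |f|² dμ`. Hence the alternating sum of the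
squared norms is `∫ Δ_{J,n} |f|² dμ`, which settles one direction. Conversely, indicators of sets of
finite measure on which all `Jᵢ` are bounded lie in `D((uC_φ)ⁿ)`; testing against them shows that
`∫_A Δ_{J,n} dμ ≤ 0` on all such `A`, and since the `Jᵢ` are finite a.e. these sets exhaust `X`
up to a null set, so `Δ_{J,n} ≤ 0` a.e.
-/

open MeasureTheory ENNReal Finset

theorem mul_norm_indicator_one_sq {X 𝕜 : Type*} [SeminormedRing 𝕜] [NormOneClass 𝕜]
    (F : X → ℝ) (A : Set X) :
    (fun x => F x * ‖A.indicator (1 : X → 𝕜) x‖ ^ 2) = A.indicator F := by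
  ext x
  by_cases hx : x ∈ A <;> simp [hx]

section

variable {X : Type*} [MeasurableSpace X] {μ : Measure X}

theorem lintegral_mul_comp_eq_lintegral_rnDeriv_mul {Y : Type*} [MeasurableSpace Y] [SFinite μ]
    {ν : Measure Y} [SigmaFinite ν] {w : X → ℝ≥0∞} {g : Y → ℝ≥0∞} {φ : X → Y}
    (hw : Measurable w) (hg : Measurable g) (hφ : Measurable φ)
    (hac : (μ.withDensity w).map φ ≪ ν) :
    ∫⁻ x, w x * g (φ x) ∂μ = ∫⁻ y, ((μ.withDensity w).map φ).rnDeriv ν y * g y ∂ν :=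
  calc ∫⁻ x, w x * g (φ x) ∂μ = ∫⁻ x, g (φ x) ∂μ.withDensity w :=
        (lintegral_withDensity_eq_lintegral_mul μ hw (hg.comp hφ)).symm
    _ = ∫⁻ y, g y ∂(μ.withDensity w).map φ := (lintegral_map hg hφ).symm
    _ = ∫⁻ y, g y ∂ν.withDensity (((μ.withDensity w).map φ).rnDeriv ν) := by
        rw [Measure.withDensity_rnDeriv_eq _ _ hac]
    _ = _ := lintegral_withDensity_eq_lintegral_mul ν (Measure.measurable_rnDeriv _ _) hg

theorem memLp_two_iff_lintegral_enorm_sq_lt_top {E : Type*} [NormedAddCommGroup E] {f : X → E}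
    (hf : AEStronglyMeasurable f μ) : MemLp f 2 μ ↔ ∫⁻ x, ‖f x‖ₑ ^ 2 ∂μ < ∞ := by
  simp [MemLp, hf, eLpNorm_lt_top_iff_lintegral_rpow_enorm_lt_top two_ne_zero ofNat_ne_top]

theorem ae_nonpos_of_forall_setIntegral_nonpos_of_ae_lt_top [SigmaFinite μ] {g : X → ℝ}
    {B : X → ℝ≥0∞} (hB : Measurable B) (hBfin : ∀ᵐ x ∂μ, B x < ∞)
    (h : ∀ (k : ℕ) (A : Set X), MeasurableSet A → μ A < ∞ → (∀ x ∈ A, B x ≤ k) →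
      IntegrableOn g A μ ∧ ∫ x in A, g x ∂μ ≤ 0) :
    ∀ᵐ x ∂μ, g x ≤ 0 := by
  have hS : ∀ k : ℕ, MeasurableSet {x | B x ≤ k} := fun k => measurableSet_le hB measurable_const
  have hk : ∀ k : ℕ, ∀ᵐ x ∂μ.restrict {x | B x ≤ k}, g x ≤ 0 := by
    intro k
    have hA : ∀ s, MeasurableSet s → μ.restrict {x | B x ≤ k} s < ∞ →
        IntegrableOn g s (μ.restrict {x | B x ≤ k}) ∧
          ∫ x in s, g x ∂μ.restrict {x | B x ≤ k} ≤ 0 := by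
      intro s hs hμs
      rw [Measure.restrict_apply hs] at hμs
      rw [IntegrableOn, Measure.restrict_restrict hs]
      exact h k _ (hs.inter (hS k)) hμs fun x hx => hx.2
    have hnonneg : 0 ≤ᵐ[μ.restrict {x | B x ≤ k}] -g :=
      ae_nonneg_of_forall_setIntegral_nonneg_of_sigmaFinite
        (fun s hs hμs => (hA s hs hμs).1.neg)
        fun s hs hμs => by simpa [integral_neg] using (hA s hs hμs).2
    filter_upwards [hnonneg] with x hx
    exact neg_nonneg.1 hx
  filter_upwards [hBfin, ae_all_iff.2 fun k => (ae_restrict_iff' (hS k)).1 (hk k)] with x hx hxk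
  obtain ⟨k, hBk⟩ := ENNReal.exists_nat_gt hx.ne
  exact hxk k hBk.le

variable {𝕜 : Type*} [NormedDivisionRing 𝕜]

def weightedComp (u : X → 𝕜) (φ : X → X) (f : X → 𝕜) : X → 𝕜 :=
  fun x => u x * f (φ x)

structure IsIterateDensity (μ : Measure X) (u : X → 𝕜) (φ : X → X) (J : ℕ → X → ℝ≥0∞) :
    Prop where
  zero : J 0 = 1
  succ : ∀ i, J (i + 1) = ((μ.withDensity fun x => J i x * ‖u x‖ₑ ^ 2).map φ).rnDeriv μ

variable {u : X → 𝕜} {φ : X → X} {J : ℕ → X → ℝ≥0∞}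

theorem IsIterateDensity.measurable (hJ : IsIterateDensity μ u φ J) (i : ℕ) :
    Measurable (J i) := by
  cases i with
  | zero => rw [hJ.zero]; exact measurable_const
  | succ i => rw [hJ.succ i]; exact Measure.measurable_rnDeriv _ _

variable [MeasurableSpace 𝕜] [BorelSpace 𝕜] [SecondCountableTopology 𝕜]

theorem measurable_iterate_weightedComp (hu : Measurable u) (hφ : Measurable φ) (i : ℕ)
    {g : X → 𝕜} (hg : Measurable g) : Measurable ((weightedComp u φ)^[i] g) := by
  induction i generalizing g with
  | zero => exact hg
  | succ i ih => exact ih (hu.mul (hg.comp hφ))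

namespace IsIterateDensity

variable [SigmaFinite μ]

theorem lintegral_enorm_iterate_sq (hJ : IsIterateDensity μ u φ J) (hu : Measurable u)
    (hφ : Measurable φ) (hns : μ.map φ ≪ μ) (i : ℕ) {g : X → 𝕜} (hg : Measurable g) :
    ∫⁻ x, ‖(weightedComp u φ)^[i] g x‖ₑ ^ 2 ∂μ = ∫⁻ x, J i x * ‖g x‖ₑ ^ 2 ∂μ := by
  induction i generalizing g with
  | zero => simp [hJ.zero]
  | succ i ih =>
    have hac : (μ.withDensity fun x => J i x * ‖u x‖ₑ ^ 2).map φ ≪ μ :=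
      ((withDensity_absolutelyContinuous μ _).map hφ).trans hns
    calc ∫⁻ x, ‖(weightedComp u φ)^[i + 1] g x‖ₑ ^ 2 ∂μ
        = ∫⁻ x, J i x * ‖weightedComp u φ g x‖ₑ ^ 2 ∂μ := ih (hu.mul (hg.comp hφ))
      _ = ∫⁻ x, J i x * ‖u x‖ₑ ^ 2 * ‖g (φ x)‖ₑ ^ 2 ∂μ := by
        simp only [weightedComp, enorm_mul, mul_pow, mul_assoc]
      _ = ∫⁻ x, J (i + 1) x * ‖g x‖ₑ ^ 2 ∂μ := by
        rw [hJ.succ i]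
        exact lintegral_mul_comp_eq_lintegral_rnDeriv_mul
          ((hJ.measurable i).mul (hu.enorm.pow_const 2)) (hg.enorm.pow_const 2) hφ hac

theorem integral_norm_iterate_sq (hJ : IsIterateDensity μ u φ J) (hu : Measurable u)
    (hφ : Measurable φ) (hns : μ.map φ ≪ μ) {i : ℕ} (hfin : ∀ᵐ x ∂μ, J i x < ∞) {g : X → 𝕜}
    (hg : Measurable g) :
    ∫ x, ‖(weightedComp u φ)^[i] g x‖ ^ 2 ∂μ = ∫ x, (J i x).toReal * ‖g x‖ ^ 2 ∂μ := by
  have hTg := (measurable_iterate_weightedComp hu hφ i hg).enorm.pow_const 2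
  calc ∫ x, ‖(weightedComp u φ)^[i] g x‖ ^ 2 ∂μ
      = ∫ x, (‖(weightedComp u φ)^[i] g x‖ₑ ^ 2).toReal ∂μ := by simp [toReal_pow]
    _ = (∫⁻ x, ‖(weightedComp u φ)^[i] g x‖ₑ ^ 2 ∂μ).toReal :=
        integral_toReal hTg.aemeasurable (ae_of_all _ fun _ => by finiteness)
    _ = (∫⁻ x, J i x * ‖g x‖ₑ ^ 2 ∂μ).toReal := by
        rw [hJ.lintegral_enorm_iterate_sq hu hφ hns i hg]
    _ = ∫ x, (J i x * ‖g x‖ₑ ^ 2).toReal ∂μ := by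
        refine (integral_toReal ((hJ.measurable i).mul (hg.enorm.pow_const 2)).aemeasurable ?_).symm
        filter_upwards [hfin] with x hx
        exact mul_lt_top hx (by finiteness)
    _ = ∫ x, (J i x).toReal * ‖g x‖ ^ 2 ∂μ := by simp [toReal_mul, toReal_pow]

theorem integrable_toReal_mul_norm_sq (hJ : IsIterateDensity μ u φ J) (hu : Measurable u)
    (hφ : Measurable φ) (hns : μ.map φ ≪ μ) {i : ℕ} {g : X → 𝕜} (hg : Measurable g)
    (hmem : MemLp ((weightedComp u φ)^[i] g) 2 μ) :
    Integrable (fun x => (J i x).toReal * ‖g x‖ ^ 2) μ := by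
  have hlt := (memLp_two_iff_lintegral_enorm_sq_lt_top hmem.1).1 hmem
  rw [hJ.lintegral_enorm_iterate_sq hu hφ hns i hg] at hlt
  simpa [toReal_mul, toReal_pow] using integrable_toReal_of_lintegral_ne_top
    ((hJ.measurable i).mul (hg.enorm.pow_const 2)).aemeasurable hlt.ne

theorem integrable_sum_mul_norm_sq (hJ : IsIterateDensity μ u φ J) (hu : Measurable u)
    (hφ : Measurable φ) (hns : μ.map φ ≪ μ) {s : Finset ℕ} (c : ℕ → ℝ) {g : X → 𝕜}
    (hg : Measurable g) (hmem : ∀ i ∈ s, MemLp ((weightedComp u φ)^[i] g) 2 μ) :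
    Integrable (fun x => (∑ i ∈ s, c i * (J i x).toReal) * ‖g x‖ ^ 2) μ := by
  simp_rw [sum_mul, mul_assoc]
  exact integrable_finsetSum s fun i hi =>
    (hJ.integrable_toReal_mul_norm_sq hu hφ hns hg (hmem i hi)).const_mul (c i)

theorem sum_mul_integral_norm_iterate_sq (hJ : IsIterateDensity μ u φ J) (hu : Measurable u)
    (hφ : Measurable φ) (hns : μ.map φ ≪ μ) {s : Finset ℕ} (c : ℕ → ℝ)
    (hfin : ∀ i ∈ s, ∀ᵐ x ∂μ, J i x < ∞) {g : X → 𝕜} (hg : Measurable g)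
    (hmem : ∀ i ∈ s, MemLp ((weightedComp u φ)^[i] g) 2 μ) :
    ∑ i ∈ s, c i * ∫ x, ‖(weightedComp u φ)^[i] g x‖ ^ 2 ∂μ =
      ∫ x, (∑ i ∈ s, c i * (J i x).toReal) * ‖g x‖ ^ 2 ∂μ := by
  simp_rw [sum_mul, mul_assoc]
  rw [integral_finsetSum s fun i hi =>
    (hJ.integrable_toReal_mul_norm_sq hu hφ hns hg (hmem i hi)).const_mul (c i)]
  refine sum_congr rfl fun i hi => ?_
  rw [integral_const_mul, hJ.integral_norm_iterate_sq hu hφ hns (hfin i hi) hg]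

theorem memLp_iterate_indicator_one (hJ : IsIterateDensity μ u φ J) (hu : Measurable u)
    (hφ : Measurable φ) (hns : μ.map φ ≪ μ) {i : ℕ} {A : Set X} (hA : MeasurableSet A)
    (hμA : μ A < ∞) {C : ℝ≥0∞} (hC : C ≠ ∞) (hJA : ∀ x ∈ A, J i x ≤ C) :
    MemLp ((weightedComp u φ)^[i] (A.indicator 1)) 2 μ := by
  have hg : Measurable (A.indicator (1 : X → 𝕜)) := measurable_one.indicator hA
  rw [memLp_two_iff_lintegral_enorm_sq_lt_top
    (measurable_iterate_weightedComp hu hφ i hg).aestronglyMeasurable,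
    hJ.lintegral_enorm_iterate_sq hu hφ hns i hg]
  calc ∫⁻ x, J i x * ‖A.indicator 1 x‖ₑ ^ 2 ∂μ ≤ ∫⁻ x, A.indicator (fun _ => C) x ∂μ :=
        lintegral_mono fun x => by by_cases hx : x ∈ A <;> simp [hx, hJA]
    _ = C * μ A := lintegral_indicator_const hA C
    _ < ∞ := mul_lt_top hC.lt_top hμA

end IsIterateDensity

end

theorem stmt7_general
    {X : Type*} [MeasurableSpace X] (μ : Measure X) [SigmaFinite μ]
    (u : X → ℂ) (hu : Measurable u)
    (φ : X → X) (hφ : Measurable φ)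
    (hns : (μ.map φ) ≪ μ)
    (J : ℕ → X → ℝ≥0∞)
    (hJ0 : J 0 = fun _ => 1)
    (hJ : ∀ i : ℕ, J (i + 1) =
      ((μ.withDensity fun x => J i x * (‖u x‖₊ : ℝ≥0∞) ^ 2).map φ).rnDeriv μ)
    (hfin : ∀ i, ∀ᵐ x ∂μ, J i x < ∞)
    (T : (X → ℂ) → X → ℂ) (hT : T = fun f x => u x * f (φ x))
    (n : ℕ) :
    (∀ f : X → ℂ, Measurable f → (∀ i ≤ n, MemLp (T^[i] f) 2 μ) →
        ∑ i ∈ range (n + 1),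
          (-1 : ℝ) ^ i * (n.choose i) * ∫ x, ‖(T^[i] f) x‖ ^ 2 ∂μ ≤ 0) ↔
      ∀ᵐ x ∂μ, ∑ i ∈ range (n + 1),
          (-1 : ℝ) ^ i * (n.choose i) * (J i x).toReal ≤ 0 := by
  obtain rfl : T = weightedComp u φ := hT
  have hJ' : IsIterateDensity μ u φ J := ⟨hJ0, hJ⟩
  set c : ℕ → ℝ := fun i => (-1 : ℝ) ^ i * n.choose i
  have hfin' : ∀ i ∈ range (n + 1), ∀ᵐ x ∂μ, J i x < ∞ := fun i _ => hfin i
  constructor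
  · intro hexp
    refine ae_nonpos_of_forall_setIntegral_nonpos_of_ae_lt_top
      (Finset.measurable_sum (range (n + 1)) fun i _ => hJ'.measurable i) ?_
      fun k A hA hμA hAk => ?_
    · filter_upwards [ae_all_iff.2 hfin] with x hx
      exact sum_lt_top.2 fun i _ => hx i
    have hmem : ∀ i ∈ range (n + 1), MemLp ((weightedComp u φ)^[i] (A.indicator 1)) 2 μ :=
      fun i hi => hJ'.memLp_iterate_indicator_one hu hφ hns hA hμA (natCast_ne_top k)
        fun x hx => (single_le_sum (fun _ _ => zero_le) hi).trans (hAk x hx)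
    have h1A : Measurable (A.indicator (1 : X → ℂ)) := measurable_one.indicator hA
    have hind := mul_norm_indicator_one_sq (𝕜 := ℂ)
      (fun x => ∑ i ∈ range (n + 1), c i * (J i x).toReal) A
    constructor
    · rw [← integrable_indicator_iff hA, ← hind]
      exact hJ'.integrable_sum_mul_norm_sq hu hφ hns c h1A hmem
    · rw [← integral_indicator hA, ← hind,
        ← hJ'.sum_mul_integral_norm_iterate_sq hu hφ hns c hfin' h1A hmem]
      exact hexp _ h1A fun i hi => hmem i (mem_range_succ_iff.2 hi)
  · intro hΔ f hf hmem
    refine (hJ'.sum_mul_integral_norm_iterate_sq hu hφ hns c hfin' hf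
      fun i hi => hmem i (mem_range_succ_iff.1 hi)).trans_le (integral_nonpos_of_ae ?_)
    filter_upwards [hΔ] with x hx
    exact mul_nonpos_of_nonpos_of_nonneg hx (sq_nonneg _)

/-- Proposition 2.6(i): `uC_φ` is `n`-expansive iff `Δ_{J,n} ≤ 0` a.e. -/
theorem stmt7
    {X : Type*} [MeasurableSpace X] (μ : Measure X) [SigmaFinite μ]
    (u : X → ℂ) (hu : Measurable u)
    (φ : X → X) (hφ : Measurable φ)
    (hns : (μ.map φ) ≪ μ)
    (J : ℕ → X → ℝ≥0∞)
    (hJ0 : J 0 = fun _ => 1)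
    (hJ : ∀ i : ℕ, J (i + 1) =
      ((μ.withDensity fun x => J i x * (‖u x‖₊ : ℝ≥0∞) ^ 2).map φ).rnDeriv μ)
    (hfin : ∀ i, ∀ᵐ x ∂μ, J i x < ∞)
    (T : (X → ℂ) → X → ℂ) (hT : T = fun f x => u x * f (φ x))
    (n : ℕ) (hn : 1 ≤ n)
    (hdense : Dense {f : Lp ℂ 2 μ |
        ∀ i ≤ n, MemLp (T^[i] (f : X → ℂ)) 2 μ}) :
    (∀ f : X → ℂ, Measurable f → (∀ i ≤ n, MemLp (T^[i] f) 2 μ) →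
        ∑ i ∈ range (n + 1),
          (-1 : ℝ) ^ i * (n.choose i) * ∫ x, ‖(T^[i] f) x‖ ^ 2 ∂μ ≤ 0) ↔
      ∀ᵐ x ∂μ, ∑ i ∈ range (n + 1),
          (-1 : ℝ) ^ i * (n.choose i) * (J i x).toReal ≤ 0 :=
  stmt7_general μ u hu φ hφ hns J hJ0 hJ hfin T hT n
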